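/- Let ℓ ≥ 2 and n = 2ℓ. Every element g of the alternating group Alt_n has a unique presentation of the form g = ∏_{r=2}^{ℓ} (t_{2r-1}^{i_{2r-1}} · u_{2r}^{j_{2r}} · v_{2r}^{k_{2r}}), where the product is taken over r = 2, 3, ..., ℓ in increasing order, and the exponents are integers satisfying, for every 2 ≤ r ≤ ℓ: 0 ≤ i_{2r-1} < 2r - 1, 0 ≤ j_{2r} < 2, and 0 ≤ k_{2r} < r. In other words, the ordered sequence t_3, u_4, v_4, t_5, ..., t_{2ℓ-1}, u_{2ℓ}, v_{2ℓ} forms an OGS for Alt_{2ℓ}. -/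
import Mathlib


/- We work in the symmetric group on `Fin n` (representing `{1, ..., n}` via `i ↦ i - 1`).
The paper multiplies permutations left-to-right: `(π₁ · π₂)(i) = π₂(π₁(i))`,
while Mathlib's `*` on `Equiv.Perm` is function composition: `(π₁ * π₂)(i) = π₁(π₂(i))`.
Hence a paper product `A · B · C` is rendered below as `C * B * A`. -/

/-- `sP n i` is the transposition `sᵢ = (i, i+1)` (1-indexed), for `1 ≤ i ≤ n - 1`. -/
def sP (n i : ℕ) : Equiv.Perm (Fin n) :=
  if h : 1 ≤ i ∧ i < n then
    Equiv.swap ⟨i - 1, lt_of_le_of_lt (Nat.sub_le i 1) h.2⟩ ⟨i, h.2⟩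
  else 1

/-- `tP n m` is `t_m = s₁ · s₂ ⋯ s_{m-1}` (paper's left-to-right product, so here the
factor for larger index is multiplied on the left).  `tP n 0 = tP n 1 = 1`. -/
def tP (n m : ℕ) : Equiv.Perm (Fin n) :=
  (List.range (m - 1)).foldl (fun g j => sP n (j + 1) * g) 1

/-- `uP n r` is `u_{2r} = t_{2r-2} · s_{2r-1}` (paper order; here reversed). -/
def uP (n r : ℕ) : Equiv.Perm (Fin n) := sP n (2 * r - 1) * tP n (2 * r - 2)

/-- `vP n r` is `v_{2r} = t_{2r}²`. -/
def vP (n r : ℕ) : Equiv.Perm (Fin n) := (tP n (2 * r)) ^ 2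

lemma sP_apply {n i : ℕ} (h1 : 1 ≤ i) (h2 : i < n) (x : Fin n) :
    ((sP n i x : Fin n) : ℕ) = if x.1 = i - 1 then i else if x.1 = i then i - 1 else x.1 := by
  unfold sP
  rw [dif_pos ⟨h1, h2⟩]
  rw [Equiv.swap_apply_def]
  simp only [Fin.ext_iff]
  split_ifs <;> simp

lemma sP_apply_of_gt {n i : ℕ} (x : Fin n) (h : i < x.1) : sP n i x = x := by
  unfold sP
  split
  · exact Equiv.swap_apply_of_ne_of_ne (Fin.ne_of_val_ne (by simp; omega))
      (Fin.ne_of_val_ne (by simp; omega))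
  · rfl

lemma tP_zero (n : ℕ) : tP n 0 = 1 := rfl
lemma tP_one (n : ℕ) : tP n 1 = 1 := rfl

lemma tP_succ (n m : ℕ) (hm : 1 ≤ m) : tP n (m + 1) = sP n m * tP n m := by
  unfold tP
  have h : m + 1 - 1 = (m - 1) + 1 := by omega
  rw [h, List.range_succ, List.foldl_append]
  show sP n (m - 1 + 1) * _ = _
  rw [Nat.sub_add_cancel hm]

lemma tP_apply {n : ℕ} (m : ℕ) (hm : m ≤ n) (x : Fin n) :
    ((tP n m x : Fin n) : ℕ) =
      if x.1 = 0 ∧ 0 < m then m - 1 else if x.1 < m then x.1 - 1 else x.1 := by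
  induction m with
  | zero => simp [tP_zero]
  | succ m ih =>
    rcases Nat.eq_zero_or_pos m with h0 | h1
    · subst h0
      rw [tP_one]
      simp only [Equiv.Perm.one_apply]
      split_ifs <;> omega
    · rw [tP_succ n m h1, Equiv.Perm.mul_apply]
      have ihm := ih (by omega)
      rw [sP_apply h1 (by omega)]
      rw [ihm]
      have hx := x.2
      split_ifs <;> omega

lemma tP_fix {n m : ℕ} (hm : m ≤ n) (x : Fin n) (h : m ≤ x.1) : tP n m x = x := by
  apply Fin.ext
  rw [tP_apply m hm]
  split_ifs <;> omega

lemma perm_pow_fix {n : ℕ} (f : Equiv.Perm (Fin n)) (x : Fin n) (h : f x = x) (p : ℕ) :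
    (f ^ p) x = x := by
  induction p with
  | zero => rfl
  | succ p ih => rw [pow_succ, Equiv.Perm.mul_apply, h, ih]

lemma tP_pow_apply {n : ℕ} (m : ℕ) (hm : m ≤ n) (i : ℕ) (x : Fin n) (hx : x.1 < m) :
    (((tP n m ^ i) x : Fin n) : ℕ) = (x.1 + (m - 1) * i) % m := by
  have hm0 : 0 < m := by omega
  induction i with
  | zero => simp [Nat.mod_eq_of_lt hx]
  | succ i ih =>
    rw [pow_succ', Equiv.Perm.mul_apply, tP_apply m hm, ih]
    set A := (x.1 + (m - 1) * i) % m with hA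
    have hAlt : A < m := Nat.mod_lt _ hm0
    have key : (if A = 0 ∧ 0 < m then m - 1 else if A < m then A - 1 else A)
        = (A + (m - 1)) % m := by
      rcases Nat.eq_zero_or_pos A with h0 | h1
      · simp [h0, hm0, Nat.mod_eq_of_lt (show m - 1 < m by omega)]
      · have h2 : A + (m - 1) = m + (A - 1) := by omega
        rw [if_neg (by omega), if_pos hAlt, h2, Nat.add_mod_left,
          Nat.mod_eq_of_lt (by omega)]
    rw [key, hA, Nat.mod_add_mod]
    congr 1
    rw [Nat.mul_succ]
    omega

lemma tP_pow_top {n : ℕ} (m : ℕ) (hm : m ≤ n) (i : ℕ) (hi : i < m) (x : Fin n)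
    (hx : x.1 = m - 1) :
    (((tP n m ^ i) x : Fin n) : ℕ) = m - 1 - i := by
  rw [tP_pow_apply m hm i x (by omega)]
  have h1 : x.1 + (m - 1) * i = m * i + (m - 1 - i) := by
    have h1 : (1:ℕ) ≤ m := by omega
    have h2 : i + 1 ≤ m := hi
    zify [h1, (by omega : i ≤ m - 1), hx]
    ring
  rw [h1, Nat.mul_add_mod, Nat.mod_eq_of_lt (by omega)]

def Blk (n r i j k : ℕ) : Equiv.Perm (Fin n) :=
  vP n r ^ k * uP n r ^ j * tP n (2 * r - 1) ^ i

lemma uP_fix {n r : ℕ} (hr : 1 ≤ r) (hn : 2 * r ≤ n) (x : Fin n) (h : 2 * r ≤ x.1) : uP n r x = x := by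
  unfold uP
  rw [Equiv.Perm.mul_apply, tP_fix (by omega) x (by omega), sP_apply_of_gt x (by omega)]

lemma vP_fix {n r : ℕ} (hn : 2 * r ≤ n) (x : Fin n) (h : 2 * r ≤ x.1) : vP n r x = x := by
  unfold vP
  exact perm_pow_fix _ _ (tP_fix (by omega) x (by omega)) 2

lemma Blk_fix {n r i j k : ℕ} (hr : 1 ≤ r) (hn : 2 * r ≤ n) (x : Fin n) (h : 2 * r ≤ x.1) :
    Blk n r i j k x = x := by
  unfold Blk
  rw [Equiv.Perm.mul_apply, Equiv.Perm.mul_apply,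
    perm_pow_fix _ _ (tP_fix (by omega) x (by omega)) i,
    perm_pow_fix _ _ (uP_fix hr hn x h) j,
    perm_pow_fix _ _ (vP_fix hn x h) k]

lemma Blk_apply_b {n r i j k : ℕ} (hr : 2 ≤ r) (hn : 2 * r ≤ n)
    (hj : j ≤ 1) (hk : k < r) (b : Fin n) (hb : b.1 = 2 * r - 1) :
    ((Blk n r i j k b : Fin n) : ℕ) = 2 * r - 1 - j - 2 * k := by
  unfold Blk
  rw [Equiv.Perm.mul_apply, Equiv.Perm.mul_apply,
    perm_pow_fix _ _ (tP_fix (by omega) b (by omega)) i]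
  -- compute uP b
  have hub : ((uP n r ^ j) b : Fin n).1 = 2 * r - 1 - j := by
    have hu : ((uP n r b : Fin n) : ℕ) = 2 * r - 2 := by
      unfold uP
      rw [Equiv.Perm.mul_apply, tP_fix (by omega) b (by omega),
        sP_apply (by omega) (by omega)]
      rw [if_neg (by omega), if_pos (by omega)]
      omega
    interval_cases j
    · simpa using hb
    · rw [pow_one]; omega
  -- compute vP ^ k
  have hvk : vP n r ^ k = tP n (2 * r) ^ (2 * k) := by
    unfold vP; rw [← pow_mul]
  rw [hvk, tP_pow_apply (2 * r) hn (2 * k) _ (by omega)]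
  rw [hub]
  have key : 2 * r - 1 - j + (2 * r - 1) * (2 * k) = 2 * r * (2 * k) + (2 * r - 1 - j - 2 * k) := by
    have h1 : j + 2 * k ≤ 2 * r - 1 := by omega
    zify [(by omega : (1:ℕ) ≤ 2 * r), (by omega : j ≤ 2 * r - 1),
      (by omega : 2 * k ≤ 2 * r - 1 - j)]
    ring
  rw [key, Nat.mul_add_mod, Nat.mod_eq_of_lt (by omega)]

lemma Blk_apply_a {n r i j k : ℕ} (hr : 2 ≤ r) (hn : 2 * r ≤ n) (hi : i < 2 * r - 1)
    (a : Fin n) (ha : a.1 = 2 * r - 2) :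
    Blk n r i j k a = (vP n r ^ k * uP n r ^ j) ⟨2 * r - 2 - i, by omega⟩ := by
  unfold Blk
  rw [Equiv.Perm.mul_apply]
  congr 1
  apply Fin.ext
  rw [tP_pow_top (2 * r - 1) (by omega) i (by omega) a (by omega)]
  simp
  omega

open Equiv.Perm in
lemma sign_sP {n i : ℕ} (h1 : 1 ≤ i) (h2 : i < n) : Equiv.Perm.sign (sP n i) = -1 := by
  unfold sP
  rw [dif_pos ⟨h1, h2⟩]
  exact Equiv.Perm.sign_swap (Fin.ne_of_val_ne (by simp; omega))

lemma sign_tP_succ {n : ℕ} (m : ℕ) (h : m + 1 ≤ n) :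
    Equiv.Perm.sign (tP n (m + 1)) = (-1) ^ m := by
  induction m with
  | zero => rw [tP_one]; simp
  | succ m ih =>
    rw [tP_succ n (m + 1) (by omega), map_mul, ih (by omega),
      sign_sP (by omega) (by omega), pow_succ]
    exact mul_comm _ _

lemma sign_Blk {n r i j k : ℕ} (hr : 2 ≤ r) (hn : 2 * r ≤ n) :
    Equiv.Perm.sign (Blk n r i j k) = 1 := by
  have hv : Equiv.Perm.sign (vP n r) = 1 := by
    unfold vP
    rw [map_pow]
    have : 2 * r = (2 * r - 1) + 1 := by omega
    rw [this, sign_tP_succ (2 * r - 1) (by omega)]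
    rw [← pow_mul]
    exact Even.neg_one_pow ⟨2 * r - 1, by omega⟩
  have hu : Equiv.Perm.sign (uP n r) = 1 := by
    unfold uP
    have h2 : 2 * r - 2 = (2 * r - 3) + 1 := by omega
    rw [map_mul, sign_sP (by omega) (by omega), h2, sign_tP_succ (2 * r - 3) (by omega),
      Odd.neg_one_pow ⟨r - 2, by omega⟩]
    decide
  have ht : Equiv.Perm.sign (tP n (2 * r - 1)) = 1 := by
    have h2 : 2 * r - 1 = (2 * r - 2) + 1 := by omega
    rw [h2, sign_tP_succ (2 * r - 2) (by omega)]
    exact Even.neg_one_pow ⟨r - 1, by omega⟩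
  unfold Blk
  rw [map_mul, map_mul, map_pow, map_pow, map_pow, hv, hu, ht]
  simp

abbrev Etype (ℓ : ℕ) := (m : Fin (ℓ - 1)) → Fin (2 * (m.1 + 2) - 1) × Fin 2 × Fin (m.1 + 2)

def Pf (ℓ : ℕ) (e : Etype ℓ) : ℕ → Equiv.Perm (Fin (2 * ℓ))
  | 0 => 1
  | R + 1 =>
    (if h : R < ℓ - 1 then
       Blk (2 * ℓ) (R + 2) ((e ⟨R, h⟩).1 : ℕ) ((e ⟨R, h⟩).2.1 : ℕ) ((e ⟨R, h⟩).2.2 : ℕ)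
     else 1) * Pf ℓ e R

lemma fold_take (ℓ : ℕ) (e : Etype ℓ) (q : ℕ) (hq : q ≤ ℓ - 1) :
    ((List.finRange (ℓ - 1)).take q).foldl
      (fun acc m =>
          vP (2 * ℓ) (m.1 + 2) ^ (((e m).2.2 : ℕ)) *
          uP (2 * ℓ) (m.1 + 2) ^ (((e m).2.1 : ℕ)) *
          tP (2 * ℓ) (2 * (m.1 + 2) - 1) ^ (((e m).1 : ℕ)) * acc)
      1 = Pf ℓ e q := by
  induction q with
  | zero => rfl
  | succ q ih =>
    have hq' : q < ℓ - 1 := hq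
    have hlen : q < (List.finRange (ℓ - 1)).length := by simpa using hq'
    rw [List.take_succ, List.getElem?_eq_getElem hlen, List.getElem_finRange]
    rw [List.foldl_append, ih (by omega)]
    show _ * _ * _ * Pf ℓ e q = Pf ℓ e (q + 1)
    simp only [Pf, dif_pos hq']
    rfl

lemma Pf_fix (ℓ : ℕ) (e : Etype ℓ) : ∀ R, R ≤ ℓ - 1 → ∀ x : Fin (2 * ℓ),
    2 * R + 2 ≤ x.1 → Pf ℓ e R x = x := by
  intro R
  induction R with
  | zero => intro _ x _; rfl
  | succ R ih =>
    intro hR x hx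
    have hR' : R < ℓ - 1 := hR
    simp only [Pf, dif_pos hR', Equiv.Perm.mul_apply]
    rw [ih (by omega) x (by omega)]
    exact Blk_fix (by omega) (by omega) x (by omega)

lemma Pf_sign (ℓ : ℕ) (e : Etype ℓ) : ∀ R, R ≤ ℓ - 1 →
    Equiv.Perm.sign (Pf ℓ e R) = 1 := by
  intro R
  induction R with
  | zero => intro _; simp [Pf]
  | succ R ih =>
    intro hR
    have hR' : R < ℓ - 1 := hR
    have hl : 2 ≤ ℓ := by omega
    simp only [Pf, dif_pos hR', map_mul]
    rw [sign_Blk (by omega) (by omega), ih (by omega), mul_one]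

lemma Pf_inj (ℓ : ℕ) (hℓ : 2 ≤ ℓ) (e e' : Etype ℓ) :
    ∀ R, R ≤ ℓ - 1 → Pf ℓ e R = Pf ℓ e' R →
      ∀ m : Fin (ℓ - 1), m.1 < R → e m = e' m := by
  intro R
  induction R with
  | zero => intro _ _ m hm; omega
  | succ R ih =>
    intro hR h m hm
    have hR' : R < ℓ - 1 := hR
    simp only [Pf, dif_pos hR'] at h
    set i1 := ((e ⟨R, hR'⟩).1 : ℕ) with hi1
    set j1 := ((e ⟨R, hR'⟩).2.1 : ℕ) with hj1
    set k1 := ((e ⟨R, hR'⟩).2.2 : ℕ) with hk1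
    set i2 := ((e' ⟨R, hR'⟩).1 : ℕ) with hi2
    set j2 := ((e' ⟨R, hR'⟩).2.1 : ℕ) with hj2
    set k2 := ((e' ⟨R, hR'⟩).2.2 : ℕ) with hk2
    have hi1lt : i1 < 2 * (R + 2) - 1 := (e ⟨R, hR'⟩).1.2
    have hj1lt : j1 < 2 := (e ⟨R, hR'⟩).2.1.2
    have hk1lt : k1 < R + 2 := (e ⟨R, hR'⟩).2.2.2
    have hi2lt : i2 < 2 * (R + 2) - 1 := (e' ⟨R, hR'⟩).1.2
    have hj2lt : j2 < 2 := (e' ⟨R, hR'⟩).2.1.2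
    have hk2lt : k2 < R + 2 := (e' ⟨R, hR'⟩).2.2.2
    have hr2 : 2 ≤ R + 2 := by omega
    have hn2 : 2 * (R + 2) ≤ 2 * ℓ := by omega
    set b : Fin (2 * ℓ) := ⟨2 * (R + 2) - 1, by omega⟩ with hbdef
    set a : Fin (2 * ℓ) := ⟨2 * (R + 2) - 2, by omega⟩ with hadef
    have hfb : ∀ f : Etype ℓ, Pf ℓ f R b = b := fun f =>
      Pf_fix ℓ f R (by omega) b (by simp [hbdef]; omega)
    have hfa : ∀ f : Etype ℓ, Pf ℓ f R a = a := fun f =>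
      Pf_fix ℓ f R (by omega) a (by simp [hadef]; omega)
    have hb1 : Blk (2 * ℓ) (R + 2) i1 j1 k1 b = Blk (2 * ℓ) (R + 2) i2 j2 k2 b := by
      have := congrArg (fun f => f b) h
      simpa [Equiv.Perm.mul_apply, hfb] using this
    have ha1 : Blk (2 * ℓ) (R + 2) i1 j1 k1 a = Blk (2 * ℓ) (R + 2) i2 j2 k2 a := by
      have := congrArg (fun f => f a) h
      simpa [Equiv.Perm.mul_apply, hfa] using this
    have hbv := congrArg Fin.val hb1
    rw [Blk_apply_b hr2 hn2 (by omega) hk1lt b rfl,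
        Blk_apply_b hr2 hn2 (by omega) hk2lt b rfl] at hbv
    have hjj : j1 = j2 := by omega
    have hkk : k1 = k2 := by omega
    rw [Blk_apply_a hr2 hn2 hi1lt a rfl, Blk_apply_a hr2 hn2 hi2lt a rfl,
        hjj, hkk] at ha1
    have hii : i1 = i2 := by
      have h5 := (vP (2 * ℓ) (R + 2) ^ k2 * uP (2 * ℓ) (R + 2) ^ j2).injective ha1
      have h6 : 2 * (R + 2) - 2 - i1 = 2 * (R + 2) - 2 - i2 := by
        simpa [Fin.ext_iff] using h5
      omega
    have heR : e ⟨R, hR'⟩ = e' ⟨R, hR'⟩ :=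
      Prod.ext (Fin.ext hii) (Prod.ext (Fin.ext hjj) (Fin.ext hkk))
    rcases Nat.lt_or_ge m.1 R with hmR | hmR
    · have hBlk : Blk (2 * ℓ) (R + 2) i1 j1 k1 = Blk (2 * ℓ) (R + 2) i2 j2 k2 := by
        rw [hii, hjj, hkk]
      rw [hBlk] at h
      exact ih (by omega) (mul_left_cancel h) m hmR
    · have hmeq : m = ⟨R, hR'⟩ := Fin.ext (show m.1 = R by omega)
      rw [hmeq]
      exact heR

lemma two_mul_prod (q : ℕ) :
    2 * ∏ m ∈ Finset.range q, ((2 * m + 3) * (2 * m + 4)) = (2 * (q + 1)).factorial := by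
  induction q with
  | zero => rfl
  | succ q ih =>
    rw [Finset.prod_range_succ, ← mul_assoc, ih]
    have h1 : 2 * (q + 1 + 1) = (2 * (q + 1) + 1) + 1 := by ring
    rw [h1, Nat.factorial_succ, Nat.factorial_succ]
    ring

/-- for `n = 2ℓ`, `ℓ ≥ 2`, every `g ∈ Alt_n` has a unique presentation
`g = ∏_{r=2}^{ℓ} (t_{2r-1}^{i_{2r-1}} · u_{2r}^{j_{2r}} · v_{2r}^{k_{2r}})`
(paper left-to-right product over `r` increasing; rendered here in composition order,
so each new block is multiplied on the left).  The index `m : Fin (ℓ-1)` corresponds to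
`r = m + 2`, with exponents `i_{2r-1} ∈ Fin (2r-1)`, `j_{2r} ∈ Fin 2`, `k_{2r} ∈ Fin r`. -/
theorem ogs_alternating_even (ℓ : ℕ) (hℓ : 2 ≤ ℓ)
    (g : Equiv.Perm (Fin (2 * ℓ))) (hg : g ∈ alternatingGroup (Fin (2 * ℓ))) :
    ∃! e : (m : Fin (ℓ - 1)) → Fin (2 * (m.1 + 2) - 1) × Fin 2 × Fin (m.1 + 2),
      (List.finRange (ℓ - 1)).foldl
        (fun acc m =>
          vP (2 * ℓ) (m.1 + 2) ^ (((e m).2.2 : ℕ)) *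
          uP (2 * ℓ) (m.1 + 2) ^ (((e m).2.1 : ℕ)) *
          tP (2 * ℓ) (2 * (m.1 + 2) - 1) ^ (((e m).1 : ℕ)) * acc)
        1 = g := by
  classical
  set F : Etype ℓ → Equiv.Perm (Fin (2 * ℓ)) := fun e =>
    (List.finRange (ℓ - 1)).foldl
      (fun acc m =>
        vP (2 * ℓ) (m.1 + 2) ^ (((e m).2.2 : ℕ)) *
        uP (2 * ℓ) (m.1 + 2) ^ (((e m).2.1 : ℕ)) *
        tP (2 * ℓ) (2 * (m.1 + 2) - 1) ^ (((e m).1 : ℕ)) * acc)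
      1 with hFdef
  have hF : ∀ e : Etype ℓ, F e = Pf ℓ e (ℓ - 1) := by
    intro e
    rw [← fold_take ℓ e (ℓ - 1) le_rfl, hFdef]
    congr 1
    rw [List.take_of_length_le (by simp)]
  have hinj : Function.Injective F := by
    intro e e' h
    funext m
    exact Pf_inj ℓ hℓ e e' (ℓ - 1) le_rfl (by rw [← hF, ← hF, h]) m m.2
  have hmem : ∀ e, F e ∈ alternatingGroup (Fin (2 * ℓ)) := fun e =>
    Equiv.Perm.mem_alternatingGroup.mpr (by rw [hF]; exact Pf_sign ℓ e (ℓ - 1) le_rfl)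
  have hnt : Nontrivial (Fin (2 * ℓ)) :=
    ⟨⟨0, by omega⟩, ⟨1, by omega⟩, by simp [Fin.ext_iff]⟩
  have hcard : Fintype.card (Etype ℓ) = Fintype.card (alternatingGroup (Fin (2 * ℓ))) := by
    have h1 : 2 * Fintype.card (alternatingGroup (Fin (2 * ℓ))) = (2 * ℓ).factorial := by
      rw [two_mul_card_alternatingGroup, Fintype.card_perm, Fintype.card_fin]
    have h2 : Fintype.card (Etype ℓ)
        = ∏ m ∈ Finset.range (ℓ - 1), ((2 * m + 3) * (2 * m + 4)) := by
      rw [Fintype.card_pi, ← Fin.prod_univ_eq_prod_range (fun m => (2 * m + 3) * (2 * m + 4))]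
      apply Finset.prod_congr rfl
      intro m _
      rw [Fintype.card_prod, Fintype.card_prod, Fintype.card_fin, Fintype.card_fin,
        Fintype.card_fin]
      have h3 : 2 * (m.1 + 2) - 1 = 2 * m.1 + 3 := by omega
      rw [h3]; ring
    have h4 := two_mul_prod (ℓ - 1)
    have h5 : ℓ - 1 + 1 = ℓ := by omega
    rw [h5] at h4
    omega
  set F' : Etype ℓ → alternatingGroup (Fin (2 * ℓ)) := fun e => ⟨F e, hmem e⟩ with hF'def
  have hinj' : Function.Injective F' := fun e e' h => hinj (congrArg Subtype.val h)
  have hbij : Function.Bijective F' :=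
    (Fintype.bijective_iff_injective_and_card F').mpr ⟨hinj', hcard⟩
  obtain ⟨e, he⟩ := hbij.surjective ⟨g, hg⟩
  refine ⟨e, ?_, ?_⟩
  · exact congrArg Subtype.val he
  · intro e' he'
    exact hinj (he'.trans (congrArg Subtype.val he).symm)
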